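/- arXiv:1110.5736 — 2 statements merged into one kernel-verified Lean document; each statement's English description precedes it below -/
import Mathlib

section
/- Let G be a 2-connected graph and H a connected subgraph of G with at least 2 vertices. If every H-path in G has even length, then the multigraph G/H obtained by contracting all edges of H (merging V(H) into a single vertex) is bipartite. -/
open SimpleGraph

/-- A graph is 2-connected: at least 3 vertices and deleting any vertex leaves it connected. -/
def TwoConnected {V : Type*} [Fintype V] (G : SimpleGraph V) : Prop :=
  3 ≤ Fintype.card V ∧ ∀ v : V, (G.induce {w : V | w ≠ v}).Connected

/-- `p` is a `K`-path: a path of positive length meeting the subgraph `K`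
exactly in its two endvertices (and using no edge of `K`). -/
def IsHPathWalk {V : Type*} (G : SimpleGraph V) (K : G.Subgraph) {u v : V}
    (p : G.Walk u v) : Prop :=
  p.IsPath ∧ 0 < p.length ∧ u ∈ K.verts ∧ v ∈ K.verts ∧
  (∀ w ∈ p.support, w ≠ u → w ≠ v → w ∉ K.verts) ∧
  (∀ e ∈ p.edges, e ∉ K.edgeSet)

/-!
Colour each vertex `v` by the parity of a walk from `V(H)` to `v` avoiding the edges of `H`.
This colouring is constant on `V(H)` and proper as soon as every walk between two vertices of
`H` avoiding `E(H)` is even. Such a walk is a path of the same parity unless it contains an odd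
cycle, and a path between vertices of `H` splits at its inner vertices in `H` into `H`-paths;
so it remains to show that every cycle `C` avoiding `E(H)` is even. Attach `C` to `H` by a
`V(H)`–`V(C)` path `P` ending at `c`; by 2-connectivity some `V(C)`–`(V(H) ∪ V(P))` path `R`
avoids `c`. For either arc of `C` from `c` to the start of `R`, the arc together with `P` and
`R` yields a path between two vertices of `H`, or a cycle attached to `H` by a proper initial
part of `P`, which is even by induction on the length of `P`. Hence both arcs have the same
parity and `C` is even.
-/

namespace SimpleGraph.Walk

variable {V : Type*} {G : SimpleGraph V}

theorem IsPath.start_notMem_tail_support {u v : V} {p : G.Walk u v} (hp : p.IsPath) :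
    u ∉ p.support.tail :=
  (List.nodup_cons.mp (p.cons_tail_support ▸ hp.support_nodup)).1

theorem isPath_append_iff {u v w : V} {p : G.Walk u v} {q : G.Walk v w} :
    (p.append q).IsPath ↔
      p.IsPath ∧ q.IsPath ∧ ∀ x ∈ p.support, x ∈ q.support → x = v := by
  rw [isPath_def, support_append, List.nodup_append']
  constructor
  · rintro ⟨hp, hq, hpq⟩
    refine ⟨.mk' hp, .mk' ?_, fun x hxp hxq => ?_⟩
    · rw [← q.cons_tail_support]
      exact List.nodup_cons.mpr ⟨hpq p.end_mem_support, hq⟩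
    · rw [← q.cons_tail_support] at hxq
      exact (List.mem_cons.mp hxq).resolve_right (hpq hxp)
  · rintro ⟨hp, hq, hpq⟩
    refine ⟨hp.support_nodup, hq.support_nodup.sublist q.support.tail_sublist,
      fun x hxp hxq => ?_⟩
    obtain rfl := hpq x hxp (List.mem_of_mem_tail hxq)
    exact hq.start_notMem_tail_support hxq

theorem IsPath.isCycle_append_of_inter {u v : V} {p : G.Walk u v} {q : G.Walk v u}
    (hp : p.IsPath) (hq : q.IsPath) (h : ∀ x ∈ p.support, x ∈ q.support → x = u ∨ x = v)
    (hlen : 2 ≤ p.length) : (p.append q).IsCycle := by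
  refine hp.isCycle_append hq (fun x hxp hxq => ?_) (Or.inl hlen)
  rcases h x (List.mem_of_mem_tail hxp) (List.mem_of_mem_tail hxq) with rfl | rfl
  · exact hp.start_notMem_tail_support hxp
  · exact hq.start_notMem_tail_support hxq

theorem exists_isPath_or_odd_isCycle {u v : V} (p : G.Walk u v) :
    (∃ q : G.Walk u v, q.IsPath ∧ q.edges ⊆ p.edges ∧ (Even q.length ↔ Even p.length)) ∨
      ∃ (x : V) (c : G.Walk x x), c.IsCycle ∧ c.edges ⊆ p.edges ∧ Odd c.length := by
  classical
  induction p with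
  | nil => exact .inl ⟨nil, by simp, by simp, .rfl⟩
  | @cons u _ _ h p ih =>
    rcases ih with ⟨q, hq, hqp, hpar⟩ | ⟨x, c, hc, hcp, hodd⟩
    · by_cases hu : u ∈ q.support
      · have hsplit := congrArg length (q.take_spec hu)
        rw [length_append] at hsplit
        rcases Nat.even_or_odd (q.takeUntil u hu).length with heven | hodd
        · refine .inr ⟨u, cons h (q.takeUntil u hu), ?_, ?_, by simpa [Nat.odd_add_one]⟩
          · refine (cons_isCycle_iff _ h).mpr ⟨hq.takeUntil hu, fun he => ?_⟩
            have := (hq.takeUntil hu).length_eq_one_of_mem_edges (Sym2.eq_swap ▸ he)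
            exact Nat.not_even_one (this ▸ heven)
          · simpa using List.cons_subset_cons _
              (List.Subset.trans (q.edges_takeUntil_subset_edges hu) hqp)
        · refine .inl ⟨q.dropUntil u hu, hq.dropUntil hu, ?_, ?_⟩
          · exact List.Subset.trans (q.edges_dropUntil_subset_edges hu)
              (List.Subset.trans hqp (by simp))
          · rw [length_cons, Nat.even_add_one, ← hpar, ← hsplit, Nat.even_add]
            simp [Nat.not_even_iff_odd.mpr hodd]
      · refine .inl ⟨cons h q, (cons_isPath_iff h q).mpr ⟨hq, hu⟩, ?_, ?_⟩
        · simpa using List.cons_subset_cons _ hqp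
        · simp [Nat.even_add_one, hpar]
    · exact .inr ⟨x, c, hc, List.Subset.trans hcp (by simp), hodd⟩

structure IsPathBetween (A B : Set V) {x y : V} (p : G.Walk x y) : Prop where
  isPath : p.IsPath
  start_mem : x ∈ A
  end_mem : y ∈ B
  eq_start : ∀ w ∈ p.support, w ∈ A → w = x
  eq_end : ∀ w ∈ p.support, w ∈ B → w = y

/-- A shortest `A`–`B` path inside `p` meets `A` and `B` only at its ends. -/
theorem exists_isPathBetween_support_subset {A B : Set V} {a b : V} (p : G.Walk a b)
    (ha : a ∈ A) (hb : b ∈ B) :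
    ∃ (x y : V) (q : G.Walk x y), q.IsPathBetween A B ∧ q.support ⊆ p.support := by
  classical
  have hex : ∃ n, ∃ x ∈ A, ∃ y ∈ B, ∃ q : G.Walk x y,
      q.IsPath ∧ q.support ⊆ p.support ∧ q.length = n :=
    ⟨_, a, ha, b, hb, p.bypass, p.bypass_isPath, p.support_bypass_subset_support, rfl⟩
  obtain ⟨x, hx, y, hy, q, hq, hqp, hlen⟩ := Nat.find_spec hex
  refine ⟨x, y, q, ⟨hq, hx, hy, fun w hw hwA => ?_, fun w hw hwB => ?_⟩, hqp⟩
  · by_contra hne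
    exact Nat.find_min hex (hlen ▸ q.length_dropUntil_lt_length hw hne)
      ⟨w, hwA, y, hy, q.dropUntil w hw, hq.dropUntil hw,
        List.Subset.trans (q.support_dropUntil_subset_support hw) hqp, rfl⟩
  · by_contra hne
    exact Nat.find_min hex (hlen ▸ q.length_takeUntil_lt_length hw hne)
      ⟨x, hx, w, hwB, q.takeUntil w hw, hq.takeUntil hw,
        List.Subset.trans (q.support_takeUntil_subset_support hw) hqp, rfl⟩

theorem IsCycle.even_length_of_forall_isPath {v w : V} {c : G.Walk v v} (hc : c.IsCycle)
    (hw : w ∈ c.support) (hwv : w ≠ v) (n : ℕ)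
    (h : ∀ a : G.Walk v w, a.IsPath → a.support ⊆ c.support → a.edges ⊆ c.edges →
      Even (n + a.length)) :
    Even c.length := by
  classical
  have hsplit := congrArg length (c.take_spec hw)
  rw [length_append] at hsplit
  have hdrop : (c.dropUntil w hw).IsPath :=
    IsCycle.isPath_of_append_right (not_nil_of_ne hwv.symm) (by rwa [c.take_spec hw])
  have h₁ := h _ (hc.isPath_takeUntil hw) (c.support_takeUntil_subset_support hw)
    (c.edges_takeUntil_subset_edges hw)
  have h₂ := h _ hdrop.reverse (by simpa using c.support_dropUntil_subset_support hw)
    (by simpa using c.edges_dropUntil_subset_edges hw)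
  rw [length_reverse] at h₂
  rw [← hsplit]
  rw [Nat.even_iff] at h₁ h₂ ⊢
  omega

theorem notMem_edgeSet_of_mem_support {H : G.Subgraph} {u v x : V} {p : G.Walk u v}
    (h : ∀ w ∈ p.support, w ∈ H.verts → w = x) : ∀ e ∈ p.edges, e ∉ H.edgeSet := by
  intro e he heH
  induction e using Sym2.ind with
  | _ a b =>
  rw [Subgraph.mem_edgeSet] at heH
  have ha := h a (p.fst_mem_support_of_mem_edges he) (H.edge_vert heH)
  have hb := h b (p.snd_mem_support_of_mem_edges he) (H.edge_vert heH.symm)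
  exact heH.ne (ha.trans hb.symm)

end SimpleGraph.Walk

theorem SimpleGraph.Connected.exists_walk_edges_notMem {V : Type*} {G : SimpleGraph V}
    (hG : G.Connected) {H : G.Subgraph} (hH : H.verts.Nonempty) (v : V) :
    ∃ a ∈ H.verts, ∃ p : G.Walk a v, ∀ e ∈ p.edges, e ∉ H.edgeSet := by
  obtain ⟨p⟩ := hG.preconnected hH.some v
  obtain ⟨a, _, q, hq, -⟩ := p.exists_isPathBetween_support_subset (B := {v}) hH.some_mem rfl
  obtain rfl := hq.end_mem
  exact ⟨a, hq.start_mem, q, Walk.notMem_edgeSet_of_mem_support hq.eq_start⟩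

section TwoConnected

variable {V : Type*} [Fintype V] {G : SimpleGraph V}

theorem TwoConnected.exists_walk_notMem_support (h2 : TwoConnected G) {v x y : V}
    (hx : x ≠ v) (hy : y ≠ v) : ∃ p : G.Walk x y, v ∉ p.support := by
  obtain ⟨p⟩ := (h2.2 v).preconnected ⟨x, hx⟩ ⟨y, hy⟩
  refine ⟨p.map (Embedding.induce _).toHom, fun hv => ?_⟩
  obtain ⟨w, -, hw⟩ := List.mem_map.mp (Walk.support_map _ _ ▸ hv)
  exact w.2 hw

theorem TwoConnected.connected (h2 : TwoConnected G) : G.Connected := by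
  classical
  have : Nonempty V := Fintype.card_pos_iff.mp (by have := h2.1; omega)
  refine ⟨fun x y => ?_⟩
  obtain ⟨v, -, hv⟩ := Finset.exists_mem_notMem_of_card_lt_card (s := {x, y}) (t := .univ)
    (by rw [Finset.card_univ]; have := h2.1; have := Finset.card_le_two (a := x) (b := y); omega)
  simp only [Finset.mem_insert, Finset.mem_singleton, not_or] at hv
  obtain ⟨p, -⟩ := h2.exists_walk_notMem_support (Ne.symm hv.1) (Ne.symm hv.2)
  exact p.reachable

end TwoConnected

def EvenHPaths {V : Type*} (G : SimpleGraph V) (H : G.Subgraph) : Prop :=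
  ∀ (u v : V) (p : G.Walk u v), IsHPathWalk G H p → Even p.length

namespace SimpleGraph.Walk

variable {V : Type*} {G : SimpleGraph V} {H : G.Subgraph}

theorem IsPath.even_length_of_mem_verts (heven : EvenHPaths G H) {a b : V}
    {q : G.Walk a b} (hq : q.IsPath) (ha : a ∈ H.verts) (hb : b ∈ H.verts)
    (hqH : ∀ e ∈ q.edges, e ∉ H.edgeSet) : Even q.length := by
  classical
  induction hn : q.length using Nat.strong_induction_on generalizing a b with
  | _ n ih =>
  by_cases hx : ∃ x ∈ q.support, x ∈ H.verts ∧ x ≠ a ∧ x ≠ b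
  · obtain ⟨x, hxq, hxH, hxa, hxb⟩ := hx
    have hsplit := congrArg length (q.take_spec hxq)
    rw [length_append] at hsplit
    have h₁ := ih _ (hn ▸ q.length_takeUntil_lt_length hxq hxb) (hq.takeUntil hxq) ha hxH
      (fun e he => hqH e (q.edges_takeUntil_subset_edges hxq he)) rfl
    have h₂ := ih _ (hn ▸ q.length_dropUntil_lt_length hxq hxa) (hq.dropUntil hxq) hxH hb
      (fun e he => hqH e (q.edges_dropUntil_subset_edges hxq he)) rfl
    rw [← hn, ← hsplit]
    exact h₁.add h₂
  · push Not at hx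
    by_cases hab : a = b
    · subst hab
      rw [← hn, (isPath_iff_nil.mp hq).length_eq_zero]
      exact .zero
    · exact hn ▸ heven a b q ⟨hq, not_nil_iff_lt_length.mp (not_nil_of_ne hab),
        ha, hb, fun w hw hwa hwb hwH => hwb (hx w hw hwH hwa), hqH⟩

section Attachment

variable {u c c' z : V} {C : G.Walk c c} {a : G.Walk c c'}

theorem IsPathBetween.even_length_append_append (heven : EvenHPaths G H)
    (hCH : ∀ e ∈ C.edges, e ∉ H.edgeSet) {P : G.Walk u c}
    (hP : P.IsPathBetween H.verts {w | w ∈ C.support}) {R : G.Walk c' z}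
    (hR : R.IsPathBetween {w | w ∈ C.support} (H.verts ∪ {w | w ∈ P.support}))
    (hzP : z ∉ P.support) (ha : a.IsPath) (haC : a.support ⊆ C.support)
    (haE : a.edges ⊆ C.edges) : Even (P.length + R.length + a.length) := by
  have haR : (a.append R).IsPath := isPath_append_iff.mpr
    ⟨ha, hR.isPath, fun y hya hyR => hR.eq_start y hyR (haC hya)⟩
  have hY : (P.append (a.append R)).IsPath := by
    refine isPath_append_iff.mpr ⟨hP.isPath, haR, fun y hyP hy => ?_⟩
    rcases (mem_support_append_iff _ _).mp hy with hya | hyR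
    · exact hP.eq_end y hyP (haC hya)
    · exact absurd (hR.eq_end y hyR (.inr hyP) ▸ hyP) hzP
  have hYH : ∀ e ∈ (P.append (a.append R)).edges, e ∉ H.edgeSet := by
    intro e he
    simp only [edges_append, List.mem_append] at he
    rcases he with he | he | he
    · exact notMem_edgeSet_of_mem_support hP.eq_start e he
    · exact hCH e (haE he)
    · exact notMem_edgeSet_of_mem_support (fun w hw hwH => hR.eq_end w hw (.inl hwH)) e he
  have := hY.even_length_of_mem_verts heven hP.start_mem (hR.end_mem.resolve_right hzP) hYH
  rw [length_append, length_append] at this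
  rwa [add_right_comm, add_assoc]

theorem IsPathBetween.isCycle_append_append {P : G.Walk u z} {X : G.Walk z c}
    (hCH : ∀ e ∈ C.edges, e ∉ H.edgeSet)
    (hP : (P.append X).IsPathBetween H.verts {w | w ∈ C.support}) {R : G.Walk c' z}
    (hR : R.IsPathBetween {w | w ∈ C.support} (H.verts ∪ {w | w ∈ (P.append X).support}))
    (hcR : c ∉ R.support) (ha : a.IsPath) (haC : a.support ⊆ C.support)
    (haE : a.edges ⊆ C.edges) :
    ((X.append a).append R).IsCycle ∧
      (∀ e ∈ ((X.append a).append R).edges, e ∉ H.edgeSet) ∧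
      P.IsPathBetween H.verts {w | w ∈ ((X.append a).append R).support} := by
  obtain ⟨hP', hX, hPX⟩ := isPath_append_iff.mp hP.isPath
  have hXP : ∀ y ∈ X.support, y ∈ (P.append X).support := fun y hy =>
    (mem_support_append_iff _ _).mpr (.inr hy)
  have hPP : ∀ y ∈ P.support, y ∈ (P.append X).support := fun y hy =>
    (mem_support_append_iff _ _).mpr (.inl hy)
  have hXa : (X.append a).IsPath := isPath_append_iff.mpr
    ⟨hX, ha, fun y hyX hya => hP.eq_end y (hXP y hyX) (haC hya)⟩
  refine ⟨hXa.isCycle_append_of_inter hR.isPath (fun y hy hyR => ?_) ?_, fun e he => ?_,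
    ⟨hP', hP.start_mem, start_mem_support _, fun y hy => hP.eq_start y (hPP y hy),
      fun y hy hyD => ?_⟩⟩
  · rcases (mem_support_append_iff _ _).mp hy with hyX | hya
    · exact .inl (hR.eq_end y hyR (.inr (hXP y hyX)))
    · exact .inr (hR.eq_start y hyR (haC hya))
  · have := not_nil_iff_lt_length.mp
      (not_nil_of_ne (p := X) (ne_of_mem_of_not_mem R.end_mem_support hcR))
    have := not_nil_iff_lt_length.mp
      (not_nil_of_ne (p := a) (ne_of_mem_of_not_mem R.start_mem_support hcR).symm)
    rw [length_append]
    omega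
  · simp only [edges_append, List.mem_append] at he
    rcases he with (he | he) | he
    · exact notMem_edgeSet_of_mem_support hP.eq_start e (by simp [he])
    · exact hCH e (haE he)
    · exact notMem_edgeSet_of_mem_support (fun w hw hwH => hR.eq_end w hw (.inl hwH)) e he
  · simp only [Set.mem_ofPred_eq, mem_support_append_iff] at hyD
    rcases hyD with (hyX | hya) | hyR
    · exact hPX y hy hyX
    · obtain rfl := hP.eq_end y (hPP y hy) (haC hya)
      exact absurd (hPX _ hy X.end_mem_support ▸ R.end_mem_support) hcR
    · exact hR.eq_end y hyR (.inr (hPP y hy))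

end Attachment

variable [Fintype V]

theorem IsCycle.even_length_of_isPathBetween (h2 : TwoConnected G)
    (hcard : 2 ≤ H.verts.ncard) (heven : EvenHPaths G H) {u c : V} {C : G.Walk c c}
    (hC : C.IsCycle) (hCH : ∀ e ∈ C.edges, e ∉ H.edgeSet) {P : G.Walk u c}
    (hP : P.IsPathBetween H.verts {w | w ∈ C.support}) : Even C.length := by
  induction hn : P.length using Nat.strong_induction_on generalizing u c with
  | _ n ih =>
  obtain ⟨y, hyH, hyc⟩ := Set.exists_ne_of_one_lt_ncard (by omega : 1 < H.verts.ncard) c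
  obtain ⟨R₀, hR₀⟩ := h2.exists_walk_notMem_support (C.adj_snd hC.not_nil).ne' hyc
  obtain ⟨c', z, R, hR, hRR₀⟩ := R₀.exists_isPathBetween_support_subset
    (A := {w | w ∈ C.support}) (B := H.verts ∪ {w | w ∈ P.support})
    (C.getVert_mem_support 1) (.inl hyH)
  have hcR : c ∉ R.support := fun hc => hR₀ (hRR₀ hc)
  have hc'c : c' ≠ c := ne_of_mem_of_not_mem R.start_mem_support hcR
  by_cases hzP : z ∈ P.support
  · obtain ⟨P', X, rfl⟩ := mem_support_iff_exists_append.mp hzP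
    have hlen : P'.length < n := by
      have := not_nil_iff_lt_length.mp
        (not_nil_of_ne (p := X) (ne_of_mem_of_not_mem R.end_mem_support hcR))
      rw [← hn, length_append]
      omega
    refine hC.even_length_of_forall_isPath hR.start_mem hc'c (X.length + R.length)
      fun a ha haC haE => ?_
    obtain ⟨hD, hDH, hP'D⟩ := hP.isCycle_append_append hCH hR hcR ha haC haE
    have := ih _ hlen hD hDH hP'D rfl
    rw [length_append, length_append] at this
    rwa [add_right_comm]
  · exact hC.even_length_of_forall_isPath hR.start_mem hc'c _
      fun a ha haC haE => hP.even_length_append_append heven hCH hR hzP ha haC haE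

theorem IsCycle.even_length_of_edges_notMem (h2 : TwoConnected G)
    (hcard : 2 ≤ H.verts.ncard) (heven : EvenHPaths G H) {c : V} {C : G.Walk c c}
    (hC : C.IsCycle) (hCH : ∀ e ∈ C.edges, e ∉ H.edgeSet) : Even C.length := by
  classical
  obtain ⟨a, haH⟩ := Set.nonempty_of_ncard_ne_zero (by omega : H.verts.ncard ≠ 0)
  obtain ⟨p⟩ := h2.connected.preconnected a c
  obtain ⟨_, c', P, hP, -⟩ := p.exists_isPathBetween_support_subset
    (B := {w | w ∈ C.support}) haH C.start_mem_support
  have hc' : c' ∈ C.support := hP.end_mem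
  simp only [← C.mem_support_rotate_iff c' hc'] at hP
  rw [← C.length_rotate c' hc']
  exact (hC.rotate hc').even_length_of_isPathBetween h2 hcard heven
    (fun e he => hCH e ((C.rotate_edges c' hc').perm.subset he)) hP

theorem even_length_of_mem_verts (h2 : TwoConnected G) (hcard : 2 ≤ H.verts.ncard)
    (heven : EvenHPaths G H) {a b : V} (w : G.Walk a b) (ha : a ∈ H.verts) (hb : b ∈ H.verts)
    (hw : ∀ e ∈ w.edges, e ∉ H.edgeSet) : Even w.length := by
  rcases w.exists_isPath_or_odd_isCycle with ⟨q, hq, hqw, hpar⟩ | ⟨x, c, hc, hcw, hodd⟩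
  · exact hpar.mp (hq.even_length_of_mem_verts heven ha hb fun e he => hw e (hqw he))
  · exact absurd (hc.even_length_of_edges_notMem h2 hcard heven fun e he => hw e (hcw he))
      (Nat.not_even_iff_odd.mpr hodd)

end SimpleGraph.Walk

theorem contraction_bipartite_general {V : Type*} [Fintype V] (G : SimpleGraph V)
    (h2 : TwoConnected G) (H : G.Subgraph)
    (hcard : 2 ≤ H.verts.ncard)
    (heven : ∀ (u v : V) (p : G.Walk u v), IsHPathWalk G H p → Even p.length) :
    ∃ b : V → Bool, (∀ x ∈ H.verts, ∀ y ∈ H.verts, b x = b y) ∧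
      ∀ x y : V, G.Adj x y → ¬ H.Adj x y → b x ≠ b y := by
  choose a ha p hp using h2.connected.exists_walk_edges_notMem
    (Set.nonempty_of_ncard_ne_zero (by omega : H.verts.ncard ≠ 0))
  refine ⟨fun v => decide (Odd (p v).length), fun x hx y hy => ?_, fun x y hxy hxyH => ?_⟩
  · have hx := Walk.even_length_of_mem_verts h2 hcard heven (p x) (ha x) hx (hp x)
    have hy := Walk.even_length_of_mem_verts h2 hcard heven (p y) (ha y) hy (hp y)
    simp [Nat.not_odd_iff_even.mpr hx, Nat.not_odd_iff_even.mpr hy]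
  · have := Walk.even_length_of_mem_verts h2 hcard heven
      ((p x).append ((Walk.cons hxy .nil).append (p y).reverse)) (ha x) (ha y) (by
        intro e he
        simp only [Walk.edges_append, Walk.edges_cons, Walk.edges_nil, Walk.edges_reverse,
          List.mem_append, List.mem_singleton, List.mem_reverse] at he
        rcases he with he | rfl | he
        · exact hp x e he
        · exact hxyH
        · exact hp y e he)
    simp only [Walk.length_append, Walk.length_cons, Walk.length_nil, Walk.length_reverse] at this
    simp only [ne_eq, decide_eq_decide]
    grind

/-- If `H` is a connected subgraph (with at least 2 vertices) of a 2-connected graph `G`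
and every `H`-path has even length, then the contraction `G/H` is bipartite: there is a
proper 2-colouring of the vertices of `G/H`, i.e. a 2-colouring of `V` which is constant
on `V(H)` and separates the endpoints of every edge of `G` not belonging to `H`. -/
theorem contraction_bipartite {V : Type*} [Fintype V] (G : SimpleGraph V)
    (h2 : TwoConnected G) (H : G.Subgraph) (hH : H.Connected)
    (hcard : 2 ≤ H.verts.ncard)
    (heven : ∀ (u v : V) (p : G.Walk u v), IsHPathWalk G H p → Even p.length) :
    ∃ b : V → Bool, (∀ x ∈ H.verts, ∀ y ∈ H.verts, b x = b y) ∧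
      ∀ x y : V, G.Adj x y → ¬ H.Adj x y → b x ≠ b y :=
  contraction_bipartite_general G h2 H hcard heven
end

section
/- Let c be a safely rainbow-connecting colouring of a connected graph H with at least 3 vertices using at least 2 colours, and let P be an H-path of odd length in a supergraph. Then the continuation colouring c' of c to H ∪ P - which colours the 2k+1 edges of P in order by a_1, …, a_k, γ, a_1, …, a_k where γ ∈ im(c) and a_1, …, a_k are distinct colours not in im(c) - is safely rainbow-connecting on H ∪ P. -/
/-!
Write `p₀ = u, …, p_{2k+1} = v` for the vertices of `P`. Any `k + 1` consecutive edges of `P`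
have distinct colours, and only the middle one has an old colour, `γ`. So two vertices are joined
by a rainbow path inside `H`, along at most `k + 1` consecutive edges of `P`, or along `P` to `u`
or `v` and on through `H`. Most of these paths miss a fresh colour; a segment of `P` through the
middle edge misses every old colour but `γ`, and `c` uses at least two. What remains are the paths
from a vertex `x` of `H` through `u` to `p_k`: they show that `p_k` is blocked for `x` only if `u`
is blocked for `x` in `H`, and likewise for `p_{k+1}` and `v`. Hence a vertex of `H` has at most
one of `p_k`, `p_{k+1}` blocked, a vertex blocked for `p_k` (for `p_{k+1}`) lies in `H` and is
blocked for `u` (for `v`) there, and the other interior vertices of `P` have none. Reversing `P`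
preserves the colour pattern, which halves the case analysis.
-/

open SimpleGraph

/-- A colouring is rainbow-connecting on a subgraph `K` of `G`. -/
def RainbowConnectingOn {V : Type*} (G : SimpleGraph V) (K : G.Subgraph)
    (c : Sym2 V → ℕ) : Prop :=
  ∀ u ∈ K.verts, ∀ v ∈ K.verts,
    ∃ p : G.Walk u v, p.IsPath ∧ (∀ e ∈ p.edges, e ∈ K.edgeSet) ∧ (p.edges.map c).Nodup

/-- `y` is blocked for `x`: every rainbow `xy`-path in `K` is blocking, i.e.
uses every colour in the image of `c`. -/
def BlockedFor {V : Type*} (G : SimpleGraph V) (K : G.Subgraph) (c : Sym2 V → ℕ)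
    (x y : V) : Prop :=
  ∀ p : G.Walk x y, p.IsPath → (∀ e ∈ p.edges, e ∈ K.edgeSet) → (p.edges.map c).Nodup →
    ∀ col ∈ c '' K.edgeSet, col ∈ p.edges.map c

/-- A colouring is safe: every vertex has at most one blocked vertex. -/
def SafeColouring {V : Type*} (G : SimpleGraph V) (K : G.Subgraph) (c : Sym2 V → ℕ) : Prop :=
  ∀ x ∈ K.verts, Set.Subsingleton {y | y ∈ K.verts ∧ BlockedFor G K c x y}

/-- Safely rainbow-connecting colouring of the subgraph `K`. -/
def SafelyRainbowConnecting {V : Type*} (G : SimpleGraph V) (K : G.Subgraph)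
    (c : Sym2 V → ℕ) : Prop :=
  RainbowConnectingOn G K c ∧ SafeColouring G K c

namespace SimpleGraph

variable {V : Type*} {G : SimpleGraph V}

namespace Walk

theorem IsPath.append_of_support_inter {u v w : V} {p : G.Walk u v} {q : G.Walk v w}
    (hp : p.IsPath) (hq : q.IsPath) (h : ∀ x ∈ p.support, x ∈ q.support → x = v) :
    (p.append q).IsPath := by
  rw [isPath_def, support_append, List.nodup_append]
  refine ⟨hp.support_nodup, q.support.tail_sublist.nodup hq.support_nodup, ?_⟩
  rintro x hxp _ hxq rfl
  obtain rfl := h x hxp (List.mem_of_mem_tail hxq)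
  have := hq.support_nodup
  rw [← q.cons_tail_support, List.nodup_cons] at this
  exact this.1 hxq

theorem exists_getVert_of_mem_support_take {u v x : V} {p : G.Walk u v} {n : ℕ}
    (hx : x ∈ (p.take n).support) : ∃ m ≤ n, m ≤ p.length ∧ p.getVert m = x := by
  obtain ⟨m, rfl, hm⟩ := mem_support_iff_exists_getVert.mp hx
  rw [take_length] at hm
  exact ⟨min n m, by omega, by omega, (take_getVert ..).symm⟩

theorem exists_getVert_of_mem_support_drop {u v x : V} {p : G.Walk u v} {n : ℕ}
    (hn : n ≤ p.length) (hx : x ∈ (p.drop n).support) :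
    ∃ m, n ≤ m ∧ m ≤ p.length ∧ p.getVert m = x := by
  obtain ⟨m, rfl, hm⟩ := mem_support_iff_exists_getVert.mp hx
  rw [drop_length] at hm
  exact ⟨n + m, by omega, by omega, (drop_getVert ..).symm⟩

theorem mem_verts_of_mem_support {K : G.Subgraph} {x y w : V} {q : G.Walk x y}
    (hy : y ∈ K.verts) (hq : ∀ e ∈ q.edges, e ∈ K.edgeSet) (hw : w ∈ q.support) :
    w ∈ K.verts := by
  induction q with
  | nil => rwa [mem_support_nil_iff.mp hw]
  | @cons a b _ hadj q ih =>
    rw [support_cons, List.mem_cons] at hw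
    rcases hw with rfl | hw
    · exact (K.mem_edgeSet.mp (hq s(w, b) (by simp))).fst_mem
    · exact ih hy (fun e he => hq e (by simp [he])) hw

theorem mem_edgeSet_sup_toSubgraph {H : G.Subgraph} {u v : V} {P : G.Walk u v} {e : Sym2 V}
    (he : e ∈ P.edges) : e ∈ (H ⊔ P.toSubgraph).edgeSet :=
  Subgraph.edgeSet_mono le_sup_right (P.mem_edges_toSubgraph.mpr he)

end Walk

end SimpleGraph

theorem IsHPathWalk.reverse {V : Type*} {G : SimpleGraph V} {K : G.Subgraph} {u v : V}
    {p : G.Walk u v} (hp : IsHPathWalk G K p) : IsHPathWalk G K p.reverse := by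
  obtain ⟨hpath, hlen, hu, hv, hint, hedge⟩ := hp
  exact ⟨hpath.reverse, by simpa using hlen, hv, hu,
    fun w hw hwv hwu => hint w (by simpa using hw) hwu hwv, fun e he => hedge e (by simpa using he)⟩

section Rainbow

variable {V : Type*} {G : SimpleGraph V} {K L : G.Subgraph} {c c' : Sym2 V → ℕ} {x y : V}

def IsRainbowPath (K : G.Subgraph) (c : Sym2 V → ℕ) {x y : V} (p : G.Walk x y) : Prop :=
  p.IsPath ∧ (∀ e ∈ p.edges, e ∈ K.edgeSet) ∧ (p.edges.map c).Nodup

theorem IsRainbowPath.reverse {p : G.Walk x y} (hp : IsRainbowPath K c p) :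
    IsRainbowPath K c p.reverse := by
  obtain ⟨hpath, hK, hnd⟩ := hp
  refine ⟨hpath.reverse, fun e he => hK e (by simpa using he), ?_⟩
  rw [Walk.edges_reverse, List.map_reverse, List.nodup_reverse]
  exact hnd

theorem IsRainbowPath.copy {x' y' : V} {p : G.Walk x y} (hx : x = x') (hy : y = y')
    (hp : IsRainbowPath K c p) : IsRainbowPath K c (p.copy hx hy) := by
  subst hx hy
  exact hp

theorem map_edges_eq_of_eqOn {p : G.Walk x y} (hp : ∀ e ∈ p.edges, e ∈ K.edgeSet)
    (hc : ∀ e ∈ K.edgeSet, c' e = c e) : p.edges.map c' = p.edges.map c :=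
  List.map_congr_left fun e he => hc e (hp e he)

theorem mem_image_of_mem_map_edges {p : G.Walk x y} (hp : ∀ e ∈ p.edges, e ∈ K.edgeSet)
    {col : ℕ} (hcol : col ∈ p.edges.map c) : col ∈ c '' K.edgeSet := by
  obtain ⟨e, he, rfl⟩ := List.mem_map.mp hcol
  exact ⟨e, hp e he, rfl⟩

theorem IsRainbowPath.mono_of_eqOn {p : G.Walk x y} (hKL : K ≤ L)
    (hc : ∀ e ∈ K.edgeSet, c' e = c e) (hp : IsRainbowPath K c p) : IsRainbowPath L c' p :=
  ⟨hp.1, fun e he => Subgraph.edgeSet_mono hKL (hp.2.1 e he),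
    map_edges_eq_of_eqOn hp.2.1 hc ▸ hp.2.2⟩

theorem BlockedFor.mem_map_edges {p : G.Walk x y} (hb : BlockedFor G K c x y)
    (hp : IsRainbowPath K c p) {col : ℕ} (hcol : col ∈ c '' K.edgeSet) : col ∈ p.edges.map c :=
  hb p hp.1 hp.2.1 hp.2.2 col hcol

theorem BlockedFor.symm (hb : BlockedFor G K c x y) : BlockedFor G K c y x := by
  intro p hpath hK hnd col hcol
  have := hb.mem_map_edges (IsRainbowPath.reverse ⟨hpath, hK, hnd⟩) hcol
  rwa [Walk.edges_reverse, List.map_reverse, List.mem_reverse] at this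

theorem not_blockedFor_self (h : (c '' K.edgeSet).Nonempty) : ¬BlockedFor G K c x x := by
  intro hb
  obtain ⟨col, hcol⟩ := h
  simpa using hb.mem_map_edges ⟨.nil, by simp, by simp⟩ hcol

theorem BlockedFor.of_le (hKL : K ≤ L) (hc : ∀ e ∈ K.edgeSet, c' e = c e)
    (hb : BlockedFor G L c' x y) : BlockedFor G K c x y := by
  intro q hpath hK hnd col hcol
  have hq : IsRainbowPath K c q := ⟨hpath, hK, hnd⟩
  obtain ⟨e, he, rfl⟩ := hcol
  rw [← map_edges_eq_of_eqOn hK hc, ← hc e he]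
  exact hb.mem_map_edges (hq.mono_of_eqOn hKL hc) ⟨e, Subgraph.edgeSet_mono hKL he, rfl⟩

end Rainbow

/-- The colour pattern `a₁, …, a_k, γ, a₁, …, a_k` along `P`, recorded through the two properties
of it that the proof uses. -/
structure IsOddContinuation {V : Type*} {G : SimpleGraph V} (H : G.Subgraph)
    (c c' : Sym2 V → ℕ) {u v : V} (P : G.Walk u v) (k : ℕ) (f : ℕ → ℕ) : Prop where
  isHPathWalk : IsHPathWalk G H P
  length_eq : P.length = 2 * k + 1
  eqOn : ∀ e ∈ H.edgeSet, c' e = c e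
  map_edges : P.edges.map c' = (List.range (2 * k + 1)).map f
  mem_image_iff : ∀ m < 2 * k + 1, f m ∈ c '' H.edgeSet ↔ m = k
  eq_add_of_eq : ∀ m m', m < m' → m' < 2 * k + 1 → f m = f m' → m' = m + (k + 1)

namespace IsOddContinuation

variable {V : Type*} {G : SimpleGraph V} {H : G.Subgraph} {c c' : Sym2 V → ℕ} {u v x : V}
  {P : G.Walk u v} {k : ℕ} {f : ℕ → ℕ}

theorem reverse (hP : IsOddContinuation H c c' P k f) :
    IsOddContinuation H c c' P.reverse k (fun m => f (2 * k - m)) where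
  isHPathWalk := hP.isHPathWalk.reverse
  length_eq := by rw [Walk.length_reverse, hP.length_eq]
  eqOn := hP.eqOn
  map_edges := by
    rw [Walk.edges_reverse, List.map_reverse, hP.map_edges, ← List.map_reverse,
      List.range_eq_range', List.reverse_range', List.map_map, ← List.range_eq_range']
    exact List.map_congr_left fun m _ => by simp only [Function.comp_apply]; congr 1; omega
  mem_image_iff m hm := by
    rw [hP.mem_image_iff _ (by omega)]
    omega
  eq_add_of_eq m m' hmm' hm' heq := by
    have := hP.eq_add_of_eq _ _ (by omega : 2 * k - m' < 2 * k - m) (by omega) heq.symm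
    omega

theorem getVert_reverse (hP : IsOddContinuation H c c' P k f) {j : ℕ} (hj : j ≤ 2 * k + 1) :
    P.reverse.getVert (2 * k + 1 - j) = P.getVert j := by
  rw [Walk.getVert_reverse, hP.length_eq]
  congr 1
  omega

theorem start_mem (hP : IsOddContinuation H c c' P k f) : u ∈ H.verts := hP.isHPathWalk.2.2.1

theorem end_mem (hP : IsOddContinuation H c c' P k f) : v ∈ H.verts := hP.isHPathWalk.2.2.2.1

theorem start_ne_end (hP : IsOddContinuation H c c' P k f) : u ≠ v := by
  rintro rfl
  have := hP.length_eq
  rw [Walk.isPath_iff_nil.mp hP.isHPathWalk.1 |>.eq_nil, Walk.length_nil] at this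
  omega

theorem getVert_injOn (hP : IsOddContinuation H c c' P k f) :
    Set.InjOn P.getVert {m | m ≤ 2 * k + 1} :=
  hP.length_eq ▸ hP.isHPathWalk.1.getVert_injOn

theorem getVert_mem_verts_iff (hP : IsOddContinuation H c c' P k f) {m : ℕ}
    (hm : m ≤ 2 * k + 1) : P.getVert m ∈ H.verts ↔ m = 0 ∨ m = 2 * k + 1 := by
  obtain ⟨hpath, -, hu, hv, hint, -⟩ := hP.isHPathWalk
  have hlen := hP.length_eq
  constructor
  · intro hmem
    by_contra! hne
    refine hint _ (Walk.mem_support_iff_exists_getVert.mpr ⟨m, rfl, by omega⟩) ?_ ?_ hmem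
    · rw [Ne, hpath.getVert_eq_start_iff (by omega)]
      exact hne.1
    · rw [Ne, hpath.getVert_eq_end_iff (by omega), hP.length_eq]
      exact hne.2
  · rintro (rfl | rfl)
    · simpa using hu
    · rwa [← hP.length_eq, Walk.getVert_length]

theorem mem_verts_sup (hP : IsOddContinuation H c c' P k f) {w : V}
    (hw : w ∈ (H ⊔ P.toSubgraph).verts) :
    w ∈ H.verts ∨ ∃ m, 0 < m ∧ m < 2 * k + 1 ∧ P.getVert m = w := by
  rcases hw with hw | hw
  · exact Or.inl hw
  obtain ⟨m, rfl, hm⟩ := Walk.mem_support_iff_exists_getVert.mp (P.mem_verts_toSubgraph.mp hw)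
  rw [hP.length_eq] at hm
  by_cases hend : m = 0 ∨ m = 2 * k + 1
  · exact Or.inl ((hP.getVert_mem_verts_iff hm).mpr hend)
  · exact Or.inr ⟨m, by omega, by omega, rfl⟩

theorem not_mem_image (hP : IsOddContinuation H c c' P k f) {m : ℕ} (hm : m < 2 * k + 1)
    (hmk : m ≠ k) : f m ∉ c '' H.edgeSet :=
  fun h => hmk ((hP.mem_image_iff m hm).mp h)

theorem mem_image_sup (hP : IsOddContinuation H c c' P k f) {m : ℕ} (hm : m < 2 * k + 1) :
    f m ∈ c' '' (H ⊔ P.toSubgraph).edgeSet := by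
  have : f m ∈ P.edges.map c' := hP.map_edges ▸ List.mem_map_of_mem (List.mem_range.mpr hm)
  obtain ⟨e, he, hce⟩ := List.mem_map.mp this
  exact ⟨e, Walk.mem_edgeSet_sup_toSubgraph he, hce⟩

theorem image_subset_image_sup (hP : IsOddContinuation H c c' P k f) :
    c '' H.edgeSet ⊆ c' '' (H ⊔ P.toSubgraph).edgeSet := by
  rintro _ ⟨e, he, rfl⟩
  exact ⟨e, Subgraph.edgeSet_mono le_sup_left he, hP.eqOn e he⟩

theorem apply_ne (hP : IsOddContinuation H c c' P k f) {m m' : ℕ} (hmm' : m < m')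
    (hm' : m' < 2 * k + 1) (hne : m' ≠ m + (k + 1)) : f m ≠ f m' :=
  fun h => hne (hP.eq_add_of_eq m m' hmm' hm' h)

theorem nodup_map_range' (hP : IsOddContinuation H c c' P k f) {i n : ℕ} (hn : n ≤ k + 1)
    (hin : i + n ≤ 2 * k + 1) : ((List.range' i n).map f).Nodup := by
  refine List.Nodup.map_on (fun m hm m' hm' heq => ?_) List.nodup_range'
  rw [List.mem_range'_1] at hm hm'
  by_contra hne
  rcases Nat.lt_or_gt_of_ne hne with h | h
  · exact hP.apply_ne h (by omega) (by omega) heq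
  · exact hP.apply_ne h (by omega) (by omega) heq.symm

theorem disjoint_map_range' (hP : IsOddContinuation H c c' P k f) {y : V} {q : G.Walk x y}
    (hq : ∀ e ∈ q.edges, e ∈ H.edgeSet) {i n : ℕ} (hin : i + n ≤ 2 * k + 1)
    (hk : k < i ∨ i + n ≤ k) : (q.edges.map c).Disjoint ((List.range' i n).map f) := by
  intro col hcolq hcolP
  obtain ⟨m, hm, rfl⟩ := List.mem_map.mp hcolP
  rw [List.mem_range'_1] at hm
  exact hP.not_mem_image (by omega) (by omega) (mem_image_of_mem_map_edges hq hcolq)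

theorem map_edges_take (hP : IsOddContinuation H c c' P k f) {i : ℕ} (hi : i ≤ 2 * k + 1) :
    (P.take i).edges.map c' = (List.range' 0 i).map f := by
  rw [Walk.edges_take, List.map_take, hP.map_edges, ← List.map_take, List.take_range,
    min_eq_left hi, List.range_eq_range']

theorem map_edges_drop (hP : IsOddContinuation H c c' P k f) (i : ℕ) :
    (P.drop i).edges.map c' = (List.range' i (2 * k + 1 - i)).map f := by
  rw [Walk.edges_drop, List.map_drop, hP.map_edges, ← List.map_drop, List.range_eq_range',
    List.drop_range']
  simp

theorem exists_segment (hP : IsOddContinuation H c c' P k f) {i j : ℕ} (hij : i ≤ j)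
    (hj : j ≤ 2 * k + 1) (hji : j ≤ i + (k + 1)) :
    ∃ R : G.Walk (P.getVert i) (P.getVert j), IsRainbowPath (H ⊔ P.toSubgraph) c' R ∧
      R.edges.map c' = (List.range' i (j - i)).map f := by
  have hend : (P.drop i).getVert (j - i) = P.getVert j := by
    rw [Walk.drop_getVert]
    congr 1
    omega
  have hcol : ((P.drop i).take (j - i)).edges.map c' = (List.range' i (j - i)).map f := by
    rw [Walk.edges_take, List.map_take, hP.map_edges_drop, ← List.map_take,
      List.take_range'_of_length_ge (by omega)]
  refine ⟨_, IsRainbowPath.copy rfl hend ⟨(hP.isHPathWalk.1.drop i).take _, ?_, ?_⟩,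
    by rw [Walk.edges_copy, hcol]⟩
  · intro e he
    rw [Walk.edges_take, Walk.edges_drop] at he
    exact Walk.mem_edgeSet_sup_toSubgraph (List.mem_of_mem_drop (List.mem_of_mem_take he))
  · rw [hcol]
    exact hP.nodup_map_range' (by omega) (by omega)

theorem exists_extension (hP : IsOddContinuation H c c' P k f) {q : G.Walk x u}
    (hq : IsRainbowPath H c q) {i : ℕ} (hi : i ≤ k) :
    ∃ R : G.Walk x (P.getVert i), IsRainbowPath (H ⊔ P.toSubgraph) c' R ∧
      R.edges.map c' = q.edges.map c ++ (List.range' 0 i).map f := by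
  have hcol : (q.append (P.take i)).edges.map c' = q.edges.map c ++ (List.range' 0 i).map f := by
    rw [Walk.edges_append, List.map_append, map_edges_eq_of_eqOn hq.2.1 hP.eqOn,
      hP.map_edges_take (by omega)]
  refine ⟨q.append (P.take i), ⟨?_, ?_, ?_⟩, hcol⟩
  · refine hq.1.append_of_support_inter (hP.isHPathWalk.1.take i) fun z hzq hzt => ?_
    obtain ⟨m, hmi, -, rfl⟩ := Walk.exists_getVert_of_mem_support_take hzt
    have := (hP.getVert_mem_verts_iff (by omega)).mp
      (Walk.mem_verts_of_mem_support hP.start_mem hq.2.1 hzq)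
    obtain rfl : m = 0 := by omega
    exact Walk.getVert_zero P
  · intro e he
    rw [Walk.edges_append, List.mem_append, Walk.edges_take] at he
    rcases he with he | he
    · exact Subgraph.edgeSet_mono le_sup_left (hq.2.1 e he)
    · exact Walk.mem_edgeSet_sup_toSubgraph (List.mem_of_mem_take he)
  · rw [hcol]
    exact hq.2.2.append (hP.nodup_map_range' (by omega) (by omega))
      (hP.disjoint_map_range' hq.2.1 (by omega) (by omega))

theorem isPath_through (hP : IsOddContinuation H c c' P k f) {q : G.Walk u v}
    (hq : IsRainbowPath H c q) {i j : ℕ} (hij : i < j) (hj : j ≤ 2 * k + 1) :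
    ((P.take i).reverse.append (q.append (P.drop j).reverse)).IsPath := by
  have hlen := hP.length_eq
  have hqH : ∀ w ∈ q.support, w ∈ H.verts := fun w =>
    Walk.mem_verts_of_mem_support hP.end_mem hq.2.1
  have hqd : (q.append (P.drop j).reverse).IsPath := by
    refine hq.1.append_of_support_inter (hP.isHPathWalk.1.drop j).reverse fun z hzq hzd => ?_
    obtain ⟨m, hjm, hm, rfl⟩ :=
      Walk.exists_getVert_of_mem_support_drop (p := P) (n := j) (by omega) (by simpa using hzd)
    have := (hP.getVert_mem_verts_iff (by omega)).mp (hqH _ hzq)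
    obtain rfl : m = 2 * k + 1 := by omega
    rw [← hlen, Walk.getVert_length]
  refine (hP.isHPathWalk.1.take i).reverse.append_of_support_inter hqd fun z hzt hz => ?_
  obtain ⟨m, hmi, -, rfl⟩ := Walk.exists_getVert_of_mem_support_take (by simpa using hzt)
  rcases (Walk.mem_support_append_iff _ _).mp hz with hzq | hzd
  · have := (hP.getVert_mem_verts_iff (by omega)).mp (hqH _ hzq)
    obtain rfl : m = 0 := by omega
    exact Walk.getVert_zero P
  · obtain ⟨l, hjl, hl, hlm⟩ :=
      Walk.exists_getVert_of_mem_support_drop (p := P) (n := j) (by omega) (by simpa using hzd)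
    have : l = m := hP.getVert_injOn (by simp; omega) (by simp; omega) hlm
    omega

theorem nodup_colours_through (hP : IsOddContinuation H c c' P k f) {q : G.Walk u v}
    (hq : IsRainbowPath H c q) {i j : ℕ} (hij : i + (k + 1) < j) (hj : j ≤ 2 * k + 1) :
    (((List.range' 0 i).map f).reverse ++
      (q.edges.map c ++ ((List.range' j (2 * k + 1 - j)).map f).reverse)).Nodup := by
  have hAB : ((List.range' 0 i).map f).Disjoint ((List.range' j (2 * k + 1 - j)).map f) := by
    intro col hA hB
    simp only [List.mem_map, List.mem_range'_1] at hA hB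
    obtain ⟨m, hm, rfl⟩ := hA
    obtain ⟨l, hl, hml⟩ := hB
    exact hP.apply_ne (m := m) (m' := l) (by omega) (by omega) (by omega) hml.symm
  have hQA := hP.disjoint_map_range' hq.2.1 (i := 0) (n := i) (by omega) (by omega)
  have hQB := hP.disjoint_map_range' hq.2.1 (i := j) (n := 2 * k + 1 - j) (by omega) (by omega)
  refine (List.nodup_reverse.mpr (hP.nodup_map_range' (by omega) (by omega))).append
    (hq.2.2.append (List.nodup_reverse.mpr (hP.nodup_map_range' (by omega) (by omega))) ?_) ?_
  · exact fun col hQ hB => hQB hQ (List.mem_reverse.mp hB)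
  · intro col hA hQB'
    rcases List.mem_append.mp hQB' with hQ | hB
    · exact hQA hQ (List.mem_reverse.mp hA)
    · exact hAB (List.mem_reverse.mp hA) (List.mem_reverse.mp hB)

theorem apply_not_mem_colours_through (hP : IsOddContinuation H c c' P k f) {q : G.Walk u v}
    (hq : IsRainbowPath H c q) {i j : ℕ} (hij : i + (k + 1) < j) (hj : j ≤ 2 * k + 1) :
    f i ∉ ((List.range' 0 i).map f).reverse ++
      (q.edges.map c ++ ((List.range' j (2 * k + 1 - j)).map f).reverse) := by
  simp only [List.mem_append, List.mem_reverse, not_or]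
  refine ⟨fun hA => ?_, fun hQ => ?_, fun hB => ?_⟩
  · obtain ⟨m, hm, hmi⟩ := List.mem_map.mp hA
    rw [List.mem_range'_1] at hm
    exact hP.apply_ne (by omega) (by omega) (by omega) hmi
  · exact hP.not_mem_image (by omega) (by omega) (mem_image_of_mem_map_edges hq.2.1 hQ)
  · obtain ⟨l, hl, hli⟩ := List.mem_map.mp hB
    rw [List.mem_range'_1] at hl
    exact hP.apply_ne (by omega) (by omega) (by omega) hli.symm

theorem exists_through (hP : IsOddContinuation H c c' P k f) {q : G.Walk u v}
    (hq : IsRainbowPath H c q) {i j : ℕ} (hij : i + (k + 1) < j) (hj : j ≤ 2 * k + 1) :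
    ∃ R : G.Walk (P.getVert i) (P.getVert j), IsRainbowPath (H ⊔ P.toSubgraph) c' R ∧
      f i ∉ R.edges.map c' := by
  set R := (P.take i).reverse.append (q.append (P.drop j).reverse)
  have hcol : R.edges.map c' = ((List.range' 0 i).map f).reverse ++
      (q.edges.map c ++ ((List.range' j (2 * k + 1 - j)).map f).reverse) := by
    simp only [R, Walk.edges_append, Walk.edges_reverse, List.map_append, List.map_reverse,
      hP.map_edges_take (by omega : i ≤ 2 * k + 1), hP.map_edges_drop,
      map_edges_eq_of_eqOn hq.2.1 hP.eqOn]
  have hedges : ∀ e ∈ R.edges, e ∈ (H ⊔ P.toSubgraph).edgeSet := by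
    intro e he
    simp only [R, Walk.edges_append, Walk.edges_reverse, List.mem_append, List.mem_reverse,
      Walk.edges_take, Walk.edges_drop] at he
    rcases he with he | he | he
    · exact Walk.mem_edgeSet_sup_toSubgraph (List.mem_of_mem_take he)
    · exact Subgraph.edgeSet_mono le_sup_left (hq.2.1 e he)
    · exact Walk.mem_edgeSet_sup_toSubgraph (List.mem_of_mem_drop he)
  refine ⟨R, ⟨hP.isPath_through hq (by omega) hj, hedges, ?_⟩, ?_⟩
  · rw [hcol]
    exact hP.nodup_colours_through hq hij hj
  · rw [hcol]
    exact hP.apply_not_mem_colours_through hq hij hj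

theorem exists_rainbowPath_to_getVert (hP : IsOddContinuation H c c' P k f)
    (hrc : RainbowConnectingOn G H c) (hx : x ∈ H.verts) {j : ℕ} (hj : j ≤ 2 * k + 1) :
    ∃ R : G.Walk x (P.getVert j), IsRainbowPath (H ⊔ P.toSubgraph) c' R := by
  rcases le_or_gt j k with hjk | hjk
  · obtain ⟨q, hq⟩ := hrc x hx u hP.start_mem
    obtain ⟨R, hR, -⟩ := hP.exists_extension hq hjk
    exact ⟨R, hR⟩
  · obtain ⟨q, hq⟩ := hrc x hx v hP.end_mem
    obtain ⟨R, hR, -⟩ := hP.reverse.exists_extension hq (i := 2 * k + 1 - j) (by omega)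
    rw [Walk.toSubgraph_reverse] at hR
    exact ⟨_, hR.copy rfl (hP.getVert_reverse hj)⟩

theorem exists_rainbowPath_getVert_getVert (hP : IsOddContinuation H c c' P k f)
    (hrc : RainbowConnectingOn G H c) {i j : ℕ} (hij : i ≤ j) (hj : j ≤ 2 * k + 1) :
    ∃ R : G.Walk (P.getVert i) (P.getVert j), IsRainbowPath (H ⊔ P.toSubgraph) c' R := by
  rcases le_or_gt j (i + (k + 1)) with hji | hji
  · obtain ⟨R, hR, -⟩ := hP.exists_segment hij hj hji
    exact ⟨R, hR⟩
  · obtain ⟨q, hq⟩ := hrc u hP.start_mem v hP.end_mem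
    obtain ⟨R, hR, -⟩ := hP.exists_through hq hji hj
    exact ⟨R, hR⟩

theorem rainbowConnectingOn (hP : IsOddContinuation H c c' P k f)
    (hrc : RainbowConnectingOn G H c) : RainbowConnectingOn G (H ⊔ P.toSubgraph) c' := by
  intro x hx y hy
  rcases hP.mem_verts_sup hx with hx | ⟨i, -, hi, rfl⟩ <;>
    rcases hP.mem_verts_sup hy with hy | ⟨j, -, hj, rfl⟩
  · obtain ⟨q, hq⟩ := hrc x hx y hy
    exact ⟨q, IsRainbowPath.mono_of_eqOn le_sup_left hP.eqOn hq⟩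
  · exact hP.exists_rainbowPath_to_getVert hrc hx hj.le
  · obtain ⟨R, hR⟩ := hP.exists_rainbowPath_to_getVert hrc hy hi.le
    exact ⟨R.reverse, hR.reverse⟩
  · rcases le_total i j with hij | hji
    · exact hP.exists_rainbowPath_getVert_getVert hrc hij hj.le
    · obtain ⟨R, hR⟩ := hP.exists_rainbowPath_getVert_getVert hrc hji hi.le
      exact ⟨R.reverse, hR.reverse⟩

theorem not_blockedFor_of_mem_verts (hP : IsOddContinuation H c c' P k f)
    (hrc : RainbowConnectingOn G H c) (hk : 0 < k) {y : V} (hx : x ∈ H.verts)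
    (hy : y ∈ H.verts) : ¬BlockedFor G (H ⊔ P.toSubgraph) c' x y := by
  intro hb
  obtain ⟨q, hq⟩ := hrc x hx y hy
  have h0 := hb.mem_map_edges (IsRainbowPath.mono_of_eqOn le_sup_left hP.eqOn hq)
    (hP.mem_image_sup (m := 0) (by omega))
  rw [map_edges_eq_of_eqOn hq.2.1 hP.eqOn] at h0
  exact hP.not_mem_image (m := 0) (by omega) (by omega) (mem_image_of_mem_map_edges hq.2.1 h0)

theorem eq_of_blockedFor_getVert (hP : IsOddContinuation H c c' P k f)
    (hrc : RainbowConnectingOn G H c) (hx : x ∈ H.verts) {j : ℕ} (hjk : j ≤ k)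
    (hb : BlockedFor G (H ⊔ P.toSubgraph) c' x (P.getVert j)) : j = k := by
  by_contra hne
  obtain ⟨q, hq⟩ := hrc x hx u hP.start_mem
  obtain ⟨R, hR, hcol⟩ := hP.exists_extension hq hjk
  have := hb.mem_map_edges hR (hP.mem_image_sup (m := k - 1) (by omega))
  rw [hcol, List.mem_append] at this
  rcases this with hQ | hA
  · exact hP.not_mem_image (by omega) (by omega) (mem_image_of_mem_map_edges hq.2.1 hQ)
  · obtain ⟨m, hm, hmk⟩ := List.mem_map.mp hA
    rw [List.mem_range'_1] at hm
    exact hP.apply_ne (by omega) (by omega) (by omega) hmk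

theorem blockedFor_start_of_blockedFor_getVert (hP : IsOddContinuation H c c' P k f)
    (hb : BlockedFor G (H ⊔ P.toSubgraph) c' x (P.getVert k)) : BlockedFor G H c x u := by
  intro q hpath hK hnd col hcol
  obtain ⟨R, hR, hRcol⟩ := hP.exists_extension (q := q) ⟨hpath, hK, hnd⟩ le_rfl
  have := hb.mem_map_edges hR (hP.image_subset_image_sup hcol)
  rw [hRcol, List.mem_append] at this
  refine this.resolve_right fun hA => ?_
  obtain ⟨m, hm, rfl⟩ := List.mem_map.mp hA
  rw [List.mem_range'_1] at hm
  exact hP.not_mem_image (by omega) (by omega) hcol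

theorem blockedFor_getVert_cases (hP : IsOddContinuation H c c' P k f)
    (hrc : RainbowConnectingOn G H c) (hx : x ∈ H.verts) {j : ℕ} (hj : j ≤ 2 * k + 1)
    (hb : BlockedFor G (H ⊔ P.toSubgraph) c' x (P.getVert j)) :
    (j = k ∧ BlockedFor G H c x u) ∨ (j = k + 1 ∧ BlockedFor G H c x v) := by
  rcases le_or_gt j k with hjk | hjk
  · obtain rfl := hP.eq_of_blockedFor_getVert hrc hx hjk hb
    exact Or.inl ⟨rfl, hP.blockedFor_start_of_blockedFor_getVert hb⟩
  · have hb' : BlockedFor G (H ⊔ P.reverse.toSubgraph) c' x (P.reverse.getVert (2 * k + 1 - j)) := by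
      rwa [Walk.toSubgraph_reverse, hP.getVert_reverse hj]
    have hjk' := hP.reverse.eq_of_blockedFor_getVert hrc hx (by omega) hb'
    exact Or.inr ⟨by omega, hP.reverse.blockedFor_start_of_blockedFor_getVert (hjk' ▸ hb')⟩

theorem not_blockedFor_getVert_getVert (hP : IsOddContinuation H c c' P k f)
    (hrc : RainbowConnectingOn G H c) (him : 2 ≤ (c '' H.edgeSet).ncard) {i j : ℕ}
    (hij : i < j) (hj : j ≤ 2 * k + 1) :
    ¬BlockedFor G (H ⊔ P.toSubgraph) c' (P.getVert i) (P.getVert j) := by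
  intro hb
  rcases le_or_gt j (i + (k + 1)) with hji | hji
  · -- the only old colour on the segment is `f k`
    obtain ⟨δ, hδ, hδk⟩ := Set.exists_ne_of_one_lt_ncard (s := c '' H.edgeSet) (by omega) (f k)
    obtain ⟨R, hR, hcol⟩ := hP.exists_segment hij.le hj hji
    have := hb.mem_map_edges hR (hP.image_subset_image_sup hδ)
    rw [hcol] at this
    obtain ⟨m, hm, rfl⟩ := List.mem_map.mp this
    rw [List.mem_range'_1] at hm
    exact hδk (congrArg f ((hP.mem_image_iff m (by omega)).mp hδ))
  · obtain ⟨q, hq⟩ := hrc u hP.start_mem v hP.end_mem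
    obtain ⟨R, hR, hmiss⟩ := hP.exists_through hq hji hj
    exact hmiss (hb.mem_map_edges hR (hP.mem_image_sup (by omega)))

theorem subsingleton_blockedFor_of_mem_verts (hP : IsOddContinuation H c c' P k f)
    (hrc : RainbowConnectingOn G H c) (hsafe : SafeColouring G H c) (hx : x ∈ H.verts) :
    {y | y ∈ (H ⊔ P.toSubgraph).verts ∧ BlockedFor G (H ⊔ P.toSubgraph) c' x y}.Subsingleton := by
  rintro y₁ ⟨hy₁, hb₁⟩ y₂ ⟨hy₂, hb₂⟩
  rcases hP.mem_verts_sup hy₁ with hy₁ | ⟨j₁, hj₁, hj₁', rfl⟩ <;>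
    rcases hP.mem_verts_sup hy₂ with hy₂ | ⟨j₂, hj₂, hj₂', rfl⟩
  · exact hsafe x hx ⟨hy₁, hb₁.of_le le_sup_left hP.eqOn⟩ ⟨hy₂, hb₂.of_le le_sup_left hP.eqOn⟩
  · exact (hP.not_blockedFor_of_mem_verts hrc (by omega) hx hy₁ hb₁).elim
  · exact (hP.not_blockedFor_of_mem_verts hrc (by omega) hx hy₂ hb₂).elim
  · have huv : ¬(BlockedFor G H c x u ∧ BlockedFor G H c x v) := fun h =>
      hP.start_ne_end (hsafe x hx ⟨hP.start_mem, h.1⟩ ⟨hP.end_mem, h.2⟩)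
    rcases hP.blockedFor_getVert_cases hrc hx hj₁'.le hb₁ with ⟨e₁, h₁⟩ | ⟨e₁, h₁⟩ <;>
      rcases hP.blockedFor_getVert_cases hrc hx hj₂'.le hb₂ with ⟨e₂, h₂⟩ | ⟨e₂, h₂⟩
    · rw [e₁, e₂]
    · exact (huv ⟨h₁, h₂⟩).elim
    · exact (huv ⟨h₂, h₁⟩).elim
    · rw [e₁, e₂]

theorem subsingleton_blockedFor_getVert (hP : IsOddContinuation H c c' P k f)
    (hrc : RainbowConnectingOn G H c) (hsafe : SafeColouring G H c)
    (him : 2 ≤ (c '' H.edgeSet).ncard) {i : ℕ} (hi : i ≤ 2 * k + 1) :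
    {y | y ∈ (H ⊔ P.toSubgraph).verts ∧
      BlockedFor G (H ⊔ P.toSubgraph) c' (P.getVert i) y}.Subsingleton := by
  have hw : (if i = k then u else v) ∈ H.verts := by
    split_ifs
    exacts [hP.start_mem, hP.end_mem]
  refine (hsafe _ hw).anti ?_
  rintro y ⟨hy, hb⟩
  rcases hP.mem_verts_sup hy with hy | ⟨j, -, hj, rfl⟩
  · refine ⟨hy, ?_⟩
    rcases hP.blockedFor_getVert_cases hrc hy hi hb.symm with ⟨e, h⟩ | ⟨e, h⟩
    · rw [if_pos e]
      exact h.symm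
    · rw [if_neg (by omega)]
      exact h.symm
  · exfalso
    rcases lt_trichotomy i j with hij | rfl | hji
    · exact hP.not_blockedFor_getVert_getVert hrc him hij hj.le hb
    · exact not_blockedFor_self ⟨_, hP.mem_image_sup hj⟩ hb
    · exact hP.not_blockedFor_getVert_getVert hrc him hji hi hb.symm

theorem safeColouring (hP : IsOddContinuation H c c' P k f) (hrc : RainbowConnectingOn G H c)
    (hsafe : SafeColouring G H c) (him : 2 ≤ (c '' H.edgeSet).ncard) :
    SafeColouring G (H ⊔ P.toSubgraph) c' := by
  intro x hx
  rcases hP.mem_verts_sup hx with hx | ⟨i, -, hi, rfl⟩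
  · exact hP.subsingleton_blockedFor_of_mem_verts hrc hsafe hx
  · exact hP.subsingleton_blockedFor_getVert hrc hsafe him hi.le

end IsOddContinuation

theorem isOddContinuation_of_colouring {V : Type*} {G : SimpleGraph V} {H : G.Subgraph}
    {c c' : Sym2 V → ℕ} {k : ℕ} {u v : V} {P : G.Walk u v} (hP : IsHPathWalk G H P)
    (hlen : P.length = 2 * k + 1) {γ : ℕ} (hγ : γ ∈ c '' H.edgeSet) {a : Fin k → ℕ}
    (ha : Function.Injective a) (hfresh : ∀ i, a i ∉ c '' H.edgeSet)
    (hagree : ∀ e ∈ H.edgeSet, c' e = c e)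
    (hcol : ∀ i : ℕ, ∀ hi : i < 2 * k + 1,
      c' (P.edges.get ⟨i, by simpa [hlen] using hi⟩) =
        if h : i < k then a ⟨i, h⟩
        else if h2 : i = k then γ
        else a ⟨i - (k + 1), by omega⟩) :
    IsOddContinuation H c c' P k (fun m => (P.edges.map c').getD m 0) := by
  have hlen' : P.edges.length = 2 * k + 1 := by rw [Walk.length_edges, hlen]
  have hval : ∀ m < 2 * k + 1, (m = k ∧ (P.edges.map c').getD m 0 = γ) ∨
      ∃ r : Fin k, (P.edges.map c').getD m 0 = a r ∧ (m = r ∨ m = r + (k + 1)) := by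
    intro m hm
    have hget : (P.edges.map c').getD m 0 = c' (P.edges.get ⟨m, by omega⟩) := by
      simp [List.getD_eq_getElem?_getD, hlen', hm]
    rw [hget, hcol m hm]
    split_ifs with h₁ h₂
    · exact Or.inr ⟨⟨m, h₁⟩, rfl, Or.inl rfl⟩
    · exact Or.inl ⟨h₂, rfl⟩
    · exact Or.inr ⟨_, rfl, Or.inr (by simp only; omega)⟩
  refine ⟨hP, hlen, hagree, ?_, fun m hm => ?_, fun m m' hmm' hm' heq => ?_⟩
  · refine List.ext_getElem (by simp [hlen']) fun m h₁ h₂ => ?_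
    simp [List.getD_eq_getElem?_getD, hlen', show m < 2 * k + 1 by simpa [hlen'] using h₁]
  · rcases hval m hm with ⟨rfl, h⟩ | ⟨r, h, hr⟩
    · rw [h]
      exact iff_of_true hγ rfl
    · rw [h]
      exact iff_of_false (hfresh r) (by omega)
  · rcases hval m (by omega) with ⟨rfl, h⟩ | ⟨r, h, hr⟩ <;>
      rcases hval m' hm' with ⟨rfl, h'⟩ | ⟨r', h', hr'⟩
    · omega
    · exact (hfresh r' (by rw [← h', ← heq, h]; exact hγ)).elim
    · exact (hfresh r (by rw [← h, heq, h']; exact hγ)).elim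
    · obtain rfl : r = r' := ha (by rw [← h, ← h', heq])
      omega

/-- Continuation of a safely rainbow-connecting colouring along an odd `H`-path is
safely rainbow-connecting: if `P` has length `2k+1` and its edges are coloured in order
by `a_1, …, a_k, γ, a_1, …, a_k` with fresh distinct colours `a_i` and `γ ∈ im c`,
then the resulting colouring of `H ∪ P` is safely rainbow-connecting. -/
theorem continuation_odd_safely_rainbow {V : Type*} (G : SimpleGraph V)
    (H : G.Subgraph)
    (c : Sym2 V → ℕ) (hc : SafelyRainbowConnecting G H c)
    (him : 2 ≤ (c '' H.edgeSet).ncard)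
    (k : ℕ) {u v : V} (P : G.Walk u v) (hP : IsHPathWalk G H P)
    (hlen : P.length = 2 * k + 1)
    (γ : ℕ) (hγ : γ ∈ c '' H.edgeSet)
    (a : Fin k → ℕ) (ha : Function.Injective a)
    (hfresh : ∀ i, a i ∉ c '' H.edgeSet)
    (c' : Sym2 V → ℕ)
    (hagree : ∀ e ∈ H.edgeSet, c' e = c e)
    (hcol : ∀ i : ℕ, ∀ hi : i < 2 * k + 1,
      c' (P.edges.get ⟨i, by simpa [hlen] using hi⟩) =
        if h : i < k then a ⟨i, h⟩
        else if h2 : i = k then γ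
        else a ⟨i - (k + 1), by omega⟩) :
    SafelyRainbowConnecting G (H ⊔ P.toSubgraph) c' := by
  have hP := isOddContinuation_of_colouring hP hlen hγ ha hfresh hagree hcol
  exact ⟨hP.rainbowConnectingOn hc.1, hP.safeColouring hc.1 hc.2 him⟩
end
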